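/- Let E be a semistable vector bundle of rank n and degree d_E on a smooth projective curve C of genus g, with μ(E) ≤ g−1, and let V ⊆ H^0(E) be a generating subspace with (d_E)/n − (2/n)·dim V + 2 ≤ Cliff(C). Then for any invertible subsheaf L ⊂ E, one has dim(H^0(L) ∩ V) ≤ (dim V)/n. -/

import Mathlib

/-- An abstract model of coherent sheaves and coherent systems on a smooth
complex projective curve `C`, recording the numerical invariants and the
geometric relations used in the statements of the paper. -/
structure AlgCurve where
  /-- coherent sheaves on `C` -/
  Sheaf : Type
  /-- degree -/
  deg : Sheaf → ℤ
  /-- rank -/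
  rk : Sheaf → ℕ
  /-- `h⁰` -/
  h0 : Sheaf → ℕ
  /-- `h¹` -/
  h1 : Sheaf → ℕ
  /-- `Subsheaf F E` : `F` is a coherent subsheaf of `E`. -/
  Subsheaf : Sheaf → Sheaf → Prop
  /-- `Subbundle F E` : `F` is a subbundle (saturated subsheaf) of `E`. -/
  Subbundle : Sheaf → Sheaf → Prop
  /-- `SES F E Q` : there is a short exact sequence `0 → F → E → Q → 0`. -/
  SES : Sheaf → Sheaf → Sheaf → Prop
  /-- isomorphism of sheaves -/
  Iso : Sheaf → Sheaf → Prop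
  /-- `Ladder F₁ E F₂ G₁ G G₂` : there is a commutative ladder between short
  exact sequences `0 → F₁ → E → F₂ → 0` and `0 → G₁ → G → G₂ → 0`
  (vertical maps given by the natural morphisms). -/
  Ladder : Sheaf → Sheaf → Sheaf → Sheaf → Sheaf → Sheaf → Prop
  /-- the sheaf is globally generated -/
  GloballyGenerated : Sheaf → Prop
  /-- the trivial bundle `𝒪_C^r` -/
  triv : ℕ → Sheaf
  /-- direct sum of sheaves -/
  dsum : Sheaf → Sheaf → Sheaf
  /-- tensor power of a line bundle -/
  tensorPow : Sheaf → ℕ → Sheaf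
  /-- `SectionsLift F E Q` : in the exact sequence `0 → F → E → Q → 0`,
  all sections of `Q` lift to `E`. -/
  SectionsLift : Sheaf → Sheaf → Sheaf → Prop
  /-- the genus of `C` -/
  genus : ℕ
  /-- `C` is hyperelliptic -/
  Hyperelliptic : Prop
  /-- `C` is a general curve (in the sense of Brill–Noether theory) -/
  GeneralCurve : Prop
  /-- coherent systems `(E, V)` on `C` -/
  Sys : Type
  /-- the underlying bundle `E` of a coherent system `(E,V)` -/
  sysSheaf : Sys → Sheaf
  /-- `dim V` -/
  sysDim : Sys → ℕ
  /-- coherent subsystem -/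
  SubSys : Sys → Sys → Prop
  /-- the coherent system `(E,V)` is generated: `V ⊗ 𝒪_C → E` is surjective -/
  SysGen : Sys → Prop
  /-- the complete coherent system `(E, H⁰(E))` -/
  complete : Sheaf → Sys
  /-- the Lazarsfeld–Mukai (kernel) bundle `M_{E,V} = ker (V ⊗ 𝒪_C → E)` -/
  LM : Sys → Sheaf
  /-- short exact sequence of coherent systems -/
  SysSES : Sys → Sys → Sys → Prop
  /-- `secDim S L = dim (H⁰(L) ∩ V)` for a subsheaf `L` of the bundle of `S = (E,V)` -/
  secDim : Sys → Sheaf → ℕ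
  /-- the Butler bundle `F_T` associated to a subsheaf `T ⊆ M_{E,V}` -/
  butlerF : Sys → Sheaf → Sheaf
  /-- the image `Im α_T` of the Butler map `α_T : F_T → E` -/
  butlerIm : Sys → Sheaf → Sheaf
  /-- `H0DualResSurj T T₁` : the restriction map `H⁰(T^*) → H⁰(T₁^*)` is surjective -/
  H0DualResSurj : Sheaf → Sheaf → Prop
  /-- an algebraic dimension function on loci of coherent systems -/
  locusDim : Set Sys → ℤ
  -- basic axioms of the model
  subbundle_subsheaf : ∀ F E, Subbundle F E → Subsheaf F E
  ses_subsheaf : ∀ F E Q, SES F E Q → Subsheaf F E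
  ses_deg : ∀ F E Q, SES F E Q → deg E = deg F + deg Q
  ses_rk : ∀ F E Q, SES F E Q → rk E = rk F + rk Q
  riemannRoch : ∀ E, (h0 E : ℤ) - h1 E = deg E + rk E * (1 - (genus : ℤ))
  deg_triv : ∀ r, deg (triv r) = 0
  rk_triv : ∀ r, rk (triv r) = r
  h0_triv : ∀ r, h0 (triv r) = r
  sysSheaf_complete : ∀ E, sysSheaf (complete E) = E
  sysDim_complete : ∀ E, sysDim (complete E) = h0 E
  sysDim_le_h0 : ∀ S, sysDim S ≤ h0 (sysSheaf S)
  subSys_subsheaf : ∀ S T, SubSys S T → Subsheaf (sysSheaf S) (sysSheaf T)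
  sysGen_gg : ∀ S, SysGen S → GloballyGenerated (sysSheaf S)
  LM_rk : ∀ S, SysGen S → (rk (LM S) : ℤ) = (sysDim S : ℤ) - rk (sysSheaf S)
  LM_deg : ∀ S, SysGen S → deg (LM S) = - deg (sysSheaf S)
  secDim_le_sysDim : ∀ S L, secDim S L ≤ sysDim S
  secDim_le_h0 : ∀ S L, secDim S L ≤ h0 L
  sectionsLift_h0 : ∀ F E Q, SES F E Q → SectionsLift F E Q → h0 E = h0 F + h0 Q

namespace AlgCurve

variable (C : AlgCurve)

/-- the slope `μ(E) = deg E / rk E` -/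
def mu (E : C.Sheaf) : ℚ := (C.deg E : ℚ) / (C.rk E : ℚ)

/-- slope semistability -/
def Semistable (E : C.Sheaf) : Prop :=
  ∀ F, C.Subsheaf F E → 0 < C.rk F → C.mu F ≤ C.mu E

/-- slope stability -/
def Stable (E : C.Sheaf) : Prop :=
  ∀ F, C.Subsheaf F E → 0 < C.rk F → C.rk F < C.rk E → C.mu F < C.mu E

/-- the Clifford index of a bundle: `Cliff(E) = μ(E) − (2/n)·h⁰(E) + 2` -/
def CliffB (E : C.Sheaf) : ℚ :=
  C.mu E - 2 * (C.h0 E : ℚ) / (C.rk E : ℚ) + 2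

/-- the linear slope `λ(E) = deg E / (h⁰(E) − rk E)` -/
def lam (E : C.Sheaf) : ℚ :=
  (C.deg E : ℚ) / ((C.h0 E : ℚ) - (C.rk E : ℚ))

/-- the linear slope of a coherent system `λ(E,V) = deg E / (dim V − rk E)` -/
def sysLam (S : C.Sys) : ℚ :=
  (C.deg (C.sysSheaf S) : ℚ) / ((C.sysDim S : ℚ) - (C.rk (C.sysSheaf S) : ℚ))

/-- `c` is the Clifford index `Cliff(C)` of the curve: the minimum of
`Cliff(L)` over line bundles with `h⁰(L) ≥ 2` and `h¹(L) ≥ 2`. -/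
def IsCliffordIndex (c : ℚ) : Prop :=
  (∀ L, C.rk L = 1 → 2 ≤ C.h0 L → 2 ≤ C.h1 L → c ≤ C.CliffB L) ∧
  (∃ L, C.rk L = 1 ∧ 2 ≤ C.h0 L ∧ 2 ≤ C.h1 L ∧ C.CliffB L = c)

/-- `c` is the rank-`n` Clifford index `Cliff_n(C)` of the curve. -/
def IsCliffordIndexRk (n : ℕ) (c : ℚ) : Prop :=
  (∀ E, C.rk E = n → C.Semistable E → 2 * n ≤ C.h0 E →
      C.mu E ≤ (C.genus : ℚ) - 1 → c ≤ C.CliffB E) ∧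
  (∃ E, C.rk E = n ∧ C.Semistable E ∧ 2 * n ≤ C.h0 E ∧
      C.mu E ≤ (C.genus : ℚ) - 1 ∧ C.CliffB E = c)

/-- `E` computes `Cliff_n(C)`. -/
def ComputesCliffRk (n : ℕ) (E : C.Sheaf) : Prop :=
  ∃ c, C.IsCliffordIndexRk n c ∧ C.rk E = n ∧ C.Semistable E ∧
    2 * n ≤ C.h0 E ∧ C.mu E ≤ (C.genus : ℚ) - 1 ∧ C.CliffB E = c

/-- `d = δ_r`, the `r`-th term of the gonality sequence of `C`:
the minimal degree of a line bundle with at least `r+1` sections. -/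
def IsGonality (r : ℕ) (d : ℤ) : Prop :=
  (∀ L, C.rk L = 1 → r + 1 ≤ C.h0 L → d ≤ C.deg L) ∧
  (∃ L, C.rk L = 1 ∧ r + 1 ≤ C.h0 L ∧ C.deg L = d)

/-- linear semistability of a generated coherent system: every generated
subsystem `(F,W)` with `deg F > 0` satisfies `λ(F,W) ≥ λ(E,V)`. -/
def LinSemistable (S : C.Sys) : Prop :=
  ∀ T, C.SubSys T S → C.SysGen T → 0 < C.deg (C.sysSheaf T) →
    C.sysLam S ≤ C.sysLam T

/-- linear stability of a generated coherent system: every proper generated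
subsystem `(F,W)` with `deg F > 0` satisfies `λ(F,W) > λ(E,V)`. -/
def LinStable (S : C.Sys) : Prop :=
  ∀ T, C.SubSys T S → C.SysGen T → 0 < C.deg (C.sysSheaf T) → T ≠ S →
    C.sysLam S < C.sysLam T

/-- `α`-stability of coherent systems -/
def AlphaStable (α : ℚ) (S : C.Sys) : Prop :=
  ∀ T, C.SubSys T S → T ≠ S → 0 < C.rk (C.sysSheaf T) →
    ((C.deg (C.sysSheaf T) : ℚ) + α * C.sysDim T) / (C.rk (C.sysSheaf T) : ℚ) <
      ((C.deg (C.sysSheaf S) : ℚ) + α * C.sysDim S) / (C.rk (C.sysSheaf S) : ℚ)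

/-- membership in `S₀(n,d,k)`: a generated coherent system of type `(n,d,k)`
which is `α`-stable for all sufficiently small `α > 0`. -/
def InS0 (n : ℕ) (d : ℤ) (k : ℕ) (S : C.Sys) : Prop :=
  C.rk (C.sysSheaf S) = n ∧ C.deg (C.sysSheaf S) = d ∧ C.sysDim S = k ∧
    C.SysGen S ∧ ∃ α₀ : ℚ, 0 < α₀ ∧ ∀ α : ℚ, 0 < α → α < α₀ → C.AlphaStable α S

/-- `(E,V)` admits a subnet: a rank-one subsystem `(L,W)` with `dim W = 3`. -/
def HasSubnet (S : C.Sys) : Prop :=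
  ∃ T, C.SubSys T S ∧ C.rk (C.sysSheaf T) = 1 ∧ C.sysDim T = 3

end AlgCurve

/-! If `dim (H⁰(L) ∩ V) ≤ 1` the bound follows from `dim V ≥ n`, which holds because `V`
generates `E`. Otherwise `L` has at least two sections, and semistability gives
`deg L ≤ μ(E) ≤ g − 1`, so by Riemann–Roch `h¹(L) ≥ h⁰(L) ≥ 2` and `L` contributes to `Cliff(C)`:
`Cliff(C) ≤ deg L − 2 dim (H⁰(L) ∩ V) + 2 ≤ μ(E) − 2 dim (H⁰(L) ∩ V) + 2`.
Comparing with `μ(E) − (2/n) dim V + 2 ≤ Cliff(C)` gives the claim. -/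

namespace AlgCurve

variable {C : AlgCurve}

theorem rk_le_sysDim_of_sysGen {S : C.Sys} (hS : C.SysGen S) :
    C.rk (C.sysSheaf S) ≤ C.sysDim S := by
  have := C.LM_rk S hS
  omega

theorem mu_of_rk_eq_one {L : C.Sheaf} (hL : C.rk L = 1) : C.mu L = C.deg L := by
  simp [mu, hL]

theorem cliffB_of_rk_eq_one {L : C.Sheaf} (hL : C.rk L = 1) :
    C.CliffB L = C.deg L - 2 * C.h0 L + 2 := by
  simp [CliffB, mu, hL]

theorem Semistable.deg_le_mu {E L : C.Sheaf} (hE : C.Semistable E) (hLE : C.Subsheaf L E)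
    (hL : C.rk L = 1) : (C.deg L : ℚ) ≤ C.mu E := by
  simpa [mu_of_rk_eq_one hL] using hE L hLE (by omega)

theorem h0_le_h1_of_deg_le {L : C.Sheaf} (hL : C.rk L = 1)
    (hdeg : C.deg L ≤ (C.genus : ℤ) - 1) : C.h0 L ≤ C.h1 L := by
  have := C.riemannRoch L
  rw [hL] at this
  omega

theorem IsCliffordIndex.le_of_deg_le {c : ℚ} (hC : C.IsCliffordIndex c) {L : C.Sheaf}
    (hL : C.rk L = 1) (hh0 : 2 ≤ C.h0 L) (hdeg : (C.deg L : ℚ) ≤ C.genus - 1) :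
    c ≤ C.deg L - 2 * C.h0 L + 2 := by
  have hdeg' : C.deg L ≤ (C.genus : ℤ) - 1 := by exact_mod_cast hdeg
  rw [← cliffB_of_rk_eq_one hL]
  exact hC.1 L hL hh0 (hh0.trans (h0_le_h1_of_deg_le hL hdeg'))

theorem IsCliffordIndex.le_of_two_le_secDim {c : ℚ} (hC : C.IsCliffordIndex c) {S : C.Sys}
    {L : C.Sheaf} (hL : C.rk L = 1) (hsec : 2 ≤ C.secDim S L)
    (hdeg : (C.deg L : ℚ) ≤ C.genus - 1) :
    c ≤ C.deg L - 2 * C.secDim S L + 2 := by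
  have hsec_le : (C.secDim S L : ℚ) ≤ C.h0 L := by exact_mod_cast C.secDim_le_h0 S L
  linarith [hC.le_of_deg_le hL (hsec.trans (C.secDim_le_h0 S L)) hdeg]

end AlgCurve

/-- section-counting bound for line subsheaves of a semistable
bundle with a generating subspace `V ⊆ H⁰(E)` satisfying the Clifford-type
numerical condition. -/
theorem stmt0 (C : AlgCurve)
    (n : ℕ) (hn : 0 < n) (E : C.Sheaf) (hrk : C.rk E = n)
    (hss : C.Semistable E) (hmu : C.mu E ≤ (C.genus : ℚ) - 1)
    (cliffC : ℚ) (hC : C.IsCliffordIndex cliffC)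
    (S : C.Sys) (hSE : C.sysSheaf S = E) (hgen : C.SysGen S)
    (hnum : (C.deg E : ℚ) / (n : ℚ) - (2 / (n : ℚ)) * (C.sysDim S : ℚ) + 2 ≤ cliffC)
    (L : C.Sheaf) (hL : C.Subsheaf L E) (hL1 : C.rk L = 1) :
    (C.secDim S L : ℚ) ≤ (C.sysDim S : ℚ) / (n : ℚ) := by
  subst hSE
  have hnQ : (0 : ℚ) < n := by exact_mod_cast hn
  have hdegL := hss.deg_le_mu hL hL1
  rcases le_or_gt (C.secDim S L) 1 with hsec | hsec
  · have hnk : (n : ℚ) ≤ C.sysDim S := by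
      exact_mod_cast hrk ▸ AlgCurve.rk_le_sysDim_of_sysGen hgen
    calc (C.secDim S L : ℚ) ≤ 1 := by exact_mod_cast hsec
      _ ≤ C.sysDim S / n := (one_le_div hnQ).mpr hnk
  · have hcliff := hC.le_of_two_le_secDim hL1 hsec (hdegL.trans hmu)
    have hmuE : C.mu (C.sysSheaf S) = C.deg (C.sysSheaf S) / n := by rw [AlgCurve.mu, hrk]
    rw [hmuE] at hdegL
    have hdiv : 2 / (n : ℚ) * C.sysDim S = 2 * (C.sysDim S / n) := by ring
    linarith
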